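/- Let μ be a minimiser of I over probability measures on ℝ². Then for every probability measure ν on ℝ² with compact support and I(ν) < +∞, one has ∫_{ℝ²} ((V∗μ)(x) + |x|²/2) dν(x) ≥ ∫_{ℝ²} ((V∗μ)(x) + |x|²/2) dμ(x). -/

import Mathlib

open MeasureTheory Real
open scoped ENNReal Classical FourierTransform RealInnerProductSpace ComplexOrder

noncomputable section

abbrev E2 : Type := EuclideanSpace ℝ (Fin 2)

/-- The anisotropic interaction potential `V(x) = -log|x| + x₁²/|x|²`
(with the junk value `V 0 = 0`; the set where the true value `+∞` matters
is handled separately). -/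
def V (x : E2) : ℝ := -Real.log ‖x‖ + (x 0) ^ 2 / ‖x‖ ^ 2

/-- A measure has compact support. -/
def HasCompactMeasureSupport (μ : Measure E2) : Prop :=
  ∃ K : Set E2, IsCompact K ∧ μ Kᶜ = 0

/-- Finite interaction energy `∬ V(x-y) dμ(x) dμ(y) < ∞`: the diagonal
(where `V = +∞`) is null and `V(x-y)` is integrable. -/
def FiniteInteractionEnergy (μ : Measure E2) : Prop :=
  (μ.prod μ) {p : E2 × E2 | p.1 = p.2} = 0 ∧
    Integrable (fun p : E2 × E2 => V (p.1 - p.2)) (μ.prod μ)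

/-- The interaction energy `∬ V(x-y) dμ(x) dμ(y)` as a real number. -/
def interEnergy (μ ν : Measure E2) : ℝ := ∫ p : E2 × E2, V (p.1 - p.2) ∂(μ.prod ν)

/-- The total energy `I(μ) = ∬ V(x-y) dμdμ + ∫ |x|² dμ`, with values in `[0,∞]`,
written as `∬ (V(x-y) + (|x|²+|y|²)/2) dμdμ` (valid since `μ` is a probability
measure); the integrand is `+∞` on the diagonal and nonnegative elsewhere. -/
def Ienergy (μ : Measure E2) : ℝ≥0∞ :=
  ∫⁻ p : E2 × E2,
    (if p.1 = p.2 then (⊤ : ℝ≥0∞)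
      else ENNReal.ofReal (V (p.1 - p.2) + (‖p.1‖ ^ 2 + ‖p.2‖ ^ 2) / 2)) ∂(μ.prod μ)

/-- The semi-circle law `m₁ = (1/π) δ₀ ⊗ √(2-t²) H¹⌞(-√2,√2)` on `ℝ²`. -/
def m1 : Measure E2 :=
  Measure.map (fun t : ℝ => (WithLp.toLp 2 ![0, t] : E2))
    ((volume.restrict (Set.Ioo (-Real.sqrt 2) (Real.sqrt 2))).withDensity
      (fun t => ENNReal.ofReal (Real.sqrt (2 - t ^ 2) / Real.pi)))

/-- The potential `(V ∗ μ)(x) = ∫ V(x-y) dμ(y)`. -/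
def Vconv (μ : Measure E2) (x : E2) : ℝ := ∫ y, V (x - y) ∂μ

/-- The support of a measure: points all of whose neighbourhoods have
positive measure. -/
def msupp (μ : Measure E2) : Set E2 := {x : E2 | ∀ U ∈ nhds x, 0 < μ U}


/-! Finiteness of `I(ν)` forces finiteness of `I(μ)`, hence null diagonals and no atoms.
The mixed energy `I(μ, ν)` is then finite too: comparing grid cells of side `t`,
`(μ⊗ν)(|x-y| ≤ t) ≤ 9 ((μ⊗μ)(|x-y| ≤ 2t) + (ν⊗ν)(|x-y| ≤ 2t))`, and summing over
`t = e^{-n}` controls the logarithmic singularity of `I(μ, ν)` by those of `I(μ)` and `I(ν)`.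
Writing `I` as the bilinear energy of the symmetrised kernel `V(x-y) + (|x|² + |y|²)/2`,
minimality of `μ` against `(1-t)μ + tν` gives
`I(μ) ≤ (1-t)² I(μ) + 2t(1-t) I(μ, ν) + t² I(ν)` for `t ∈ [0, 1]`, so `I(μ) ≤ I(μ, ν)`.
By Fubini both sides of the claim are these energies minus the same constant `∫ |y|² dμ / 2`. -/

open Set

lemma log_le_three_div_sixteen_mul_sq {r : ℝ} (hr : 0 < r) : log r ≤ 3 / 16 * r ^ 2 := by
  have h := log_le_sub_one_of_pos (show 0 < r ^ 2 / exp 1 by positivity)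
  rw [log_div (by positivity) (exp_ne_zero 1), log_exp, log_pow] at h
  have he : r ^ 2 / exp 1 ≤ r ^ 2 * (10 / 27) := by
    rw [div_le_iff₀ (exp_pos 1)]
    nlinarith [exp_one_gt_d9, sq_nonneg r]
  push_cast at h
  nlinarith

lemma sq_apply_le_sq_norm (x : E2) (i : Fin 2) : x i ^ 2 ≤ ‖x‖ ^ 2 := by
  have := PiLp.norm_apply_le x i
  nlinarith [norm_nonneg (x i), Real.norm_eq_abs (x i), sq_abs (x i)]

lemma neg_log_norm_le_V (x : E2) : -log ‖x‖ ≤ V x :=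
  le_add_of_nonneg_right (by positivity)

lemma V_le_neg_log_norm_add_one (x : E2) : V x ≤ -log ‖x‖ + 1 := by
  unfold V
  gcongr
  exact div_le_one_of_le₀ (sq_apply_le_sq_norm x 0) (sq_nonneg _)

lemma V_neg (x : E2) : V (-x) = V x := by
  simp [V]

lemma measurable_E2_apply (i : Fin 2) : Measurable fun x : E2 => x i :=
  (measurable_pi_apply i).comp (WithLp.measurable_ofLp 2 _)

lemma measurable_V : Measurable V := by
  have := measurable_E2_apply 0
  unfold V
  fun_prop

def energyDensity (p : E2 × E2) : ℝ := V (p.1 - p.2) + (‖p.1‖ ^ 2 + ‖p.2‖ ^ 2) / 2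

lemma neg_log_le_energyDensity (p : E2 × E2) : -log ‖p.1 - p.2‖ ≤ energyDensity p := by
  have := neg_log_norm_le_V (p.1 - p.2)
  unfold energyDensity
  nlinarith [sq_nonneg ‖p.1‖, sq_nonneg ‖p.2‖]

-- `-log ‖x - y‖ ≥ -(3/16) ‖x - y‖² ≥ -(3/8) (‖x‖² + ‖y‖²)`, which leaves `1/2 - 3/8 = 1/8`.
lemma sq_norm_add_sq_norm_div_eight_le_energyDensity {p : E2 × E2} (hp : p.1 ≠ p.2) :
    (‖p.1‖ ^ 2 + ‖p.2‖ ^ 2) / 8 ≤ energyDensity p := by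
  have hlog := log_le_three_div_sixteen_mul_sq (norm_pos_iff.2 (sub_ne_zero.2 hp))
  have hV := neg_log_norm_le_V (p.1 - p.2)
  have hsub : ‖p.1 - p.2‖ ^ 2 ≤ 2 * (‖p.1‖ ^ 2 + ‖p.2‖ ^ 2) := by
    nlinarith [norm_sub_le p.1 p.2, norm_nonneg (p.1 - p.2), sq_nonneg (‖p.1‖ - ‖p.2‖)]
  unfold energyDensity
  linarith

lemma energyDensity_nonneg {p : E2 × E2} (hp : p.1 ≠ p.2) : 0 ≤ energyDensity p :=
  (div_nonneg (by positivity) (by norm_num)).trans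
    (sq_norm_add_sq_norm_div_eight_le_energyDensity hp)

lemma energyDensity_le (p : E2 × E2) :
    energyDensity p ≤ 1 + -log ‖p.1 - p.2‖ + (‖p.1‖ ^ 2 + ‖p.2‖ ^ 2) / 2 := by
  have := V_le_neg_log_norm_add_one (p.1 - p.2)
  unfold energyDensity
  linarith

lemma energyDensity_swap (p : E2 × E2) : energyDensity p.swap = energyDensity p := by
  rw [energyDensity, energyDensity, Prod.fst_swap, Prod.snd_swap, ← neg_sub, V_neg,
    add_comm (‖p.2‖ ^ 2)]

lemma measurable_energyDensity : Measurable energyDensity := by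
  have := measurable_V
  unfold energyDensity
  fun_prop

def energyKernel (p : E2 × E2) : ℝ≥0∞ :=
  if p.1 = p.2 then ∞ else ENNReal.ofReal (energyDensity p)

def crossEnergy (μ ν : Measure E2) : ℝ≥0∞ := ∫⁻ p, energyKernel p ∂(μ.prod ν)

lemma Ienergy_eq_crossEnergy (μ : Measure E2) : Ienergy μ = crossEnergy μ μ := rfl

lemma energyKernel_swap (p : E2 × E2) : energyKernel p.swap = energyKernel p := by
  simp only [energyKernel, Prod.fst_swap, Prod.snd_swap, eq_comm (a := p.2), energyDensity_swap]

lemma crossEnergy_comm (μ ν : Measure E2) [SFinite μ] [SFinite ν] :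
    crossEnergy μ ν = crossEnergy ν μ := by
  rw [crossEnergy, crossEnergy, ← lintegral_prod_swap]
  simp only [energyKernel_swap]

lemma ofReal_neg_log_le_energyKernel (p : E2 × E2) :
    ENNReal.ofReal (-log ‖p.1 - p.2‖) ≤ energyKernel p := by
  unfold energyKernel
  split_ifs
  · exact le_top
  · exact ENNReal.ofReal_le_ofReal (neg_log_le_energyDensity p)

lemma energyKernel_ae_eq_ofReal {ρ : Measure (E2 × E2)} (hρ : ρ (diagonal E2) = 0) :
    energyKernel =ᵐ[ρ] fun p => ENNReal.ofReal (energyDensity p) := by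
  filter_upwards [measure_eq_zero_iff_ae_notMem.1 hρ] with p hp
  exact if_neg hp

lemma prod_diagonal_eq_zero_of_crossEnergy_ne_top {μ ν : Measure E2}
    (h : crossEnergy μ ν ≠ ∞) : (μ.prod ν) (diagonal E2) = 0 := by
  have hle : ∞ * (μ.prod ν) (diagonal E2) ≤ crossEnergy μ ν := by
    rw [← lintegral_indicator_const measurableSet_diagonal]
    refine lintegral_mono fun p => ?_
    by_cases hp : p ∈ diagonal E2
    · simp [energyKernel, hp.out]
    · simp [indicator_of_notMem hp]
  by_contra hne
  exact h (top_unique (ENNReal.top_mul hne ▸ hle))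

lemma nullSingletonClass_of_prod_diagonal_eq_zero {α : Type*} [MeasurableSpace α] {μ : Measure α}
    [SFinite μ] (h : (μ.prod μ) (diagonal α) = 0) : NullSingletonClass μ where
  measure_singleton x := by
    have hsub : ({x} : Set α) ×ˢ ({x} : Set α) ⊆ diagonal α := by
      rintro ⟨a, b⟩ ⟨ha, hb⟩
      exact ha.trans hb.symm
    have h0 := measure_mono_null hsub h
    rwa [Measure.prod_prod, mul_self_eq_zero] at h0

lemma prod_diagonal_eq_zero {α : Type*} [MeasurableSpace α] [MeasurableEq α]
    (κ μ : Measure α) [SFinite μ] [NullSingletonClass μ] : (κ.prod μ) (diagonal α) = 0 := by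
  rw [Measure.prod_apply measurableSet_diagonal]
  have hslice : ∀ x : α, Prod.mk x ⁻¹' diagonal α = {x} := fun x => by
    ext y
    simp [eq_comm]
  simp [hslice]

lemma lintegral_comp_fst_prod {α β : Type*} [MeasurableSpace α] [MeasurableSpace β]
    (κ : Measure α) (μ : Measure β) [SFinite μ] [IsProbabilityMeasure μ] {g : α → ℝ≥0∞}
    (hg : Measurable g) : ∫⁻ p, g p.1 ∂(κ.prod μ) = ∫⁻ x, g x ∂κ := by
  rw [← lintegral_map hg measurable_fst, Measure.map_fst_prod, measure_univ, one_smul]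

lemma lintegral_comp_snd_prod {α β : Type*} [MeasurableSpace α] [MeasurableSpace β]
    (κ : Measure α) (μ : Measure β) [SFinite μ] [IsProbabilityMeasure κ] {g : β → ℝ≥0∞}
    (hg : Measurable g) : ∫⁻ p, g p.2 ∂(κ.prod μ) = ∫⁻ y, g y ∂μ := by
  rw [← lintegral_map hg measurable_snd, Measure.map_snd_prod, measure_univ, one_smul]

lemma lintegral_sq_norm_le_crossEnergy (μ : Measure E2) [IsProbabilityMeasure μ]
    (hμ : (μ.prod μ) (diagonal E2) = 0) :
    ∫⁻ x, ENNReal.ofReal (‖x‖ ^ 2) ∂μ ≤ 8 * crossEnergy μ μ := by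
  have hg : Measurable fun x : E2 => ENNReal.ofReal (‖x‖ ^ 2) := by fun_prop
  rw [← lintegral_comp_fst_prod μ μ hg, crossEnergy, ← lintegral_const_mul' _ _ (by simp)]
  refine lintegral_mono_ae ?_
  filter_upwards [measure_eq_zero_iff_ae_notMem.1 hμ] with p hp
  have := sq_norm_add_sq_norm_div_eight_le_energyDensity hp
  rw [energyKernel, if_neg (show ¬p.1 = p.2 from hp),
    show (8 : ℝ≥0∞) = ENNReal.ofReal 8 by norm_num, ← ENNReal.ofReal_mul (by norm_num)]
  exact ENNReal.ofReal_le_ofReal (by nlinarith [sq_nonneg ‖p.2‖])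

lemma lintegral_sq_norm_ne_top {μ : Measure E2} [IsProbabilityMeasure μ]
    (hμ : crossEnergy μ μ ≠ ∞) : ∫⁻ x, ENNReal.ofReal (‖x‖ ^ 2) ∂μ ≠ ∞ :=
  ne_top_of_le_ne_top (ENNReal.mul_ne_top (by simp) hμ)
    (lintegral_sq_norm_le_crossEnergy μ (prod_diagonal_eq_zero_of_crossEnergy_ne_top hμ))

def nearDiagonal (t : ℝ) : Set (E2 × E2) := {p | ‖p.1 - p.2‖ ≤ t}

lemma measurableSet_nearDiagonal (t : ℝ) : MeasurableSet (nearDiagonal t) :=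
  measurableSet_le (by fun_prop) measurable_const

def gridIndex (t : ℝ) (x : E2) : ℤ × ℤ := (⌊x 0 / t⌋, ⌊x 1 / t⌋)

lemma measurable_gridIndex (t : ℝ) : Measurable (gridIndex t) :=
  (Int.measurable_floor.comp ((measurable_E2_apply 0).div_const t)).prodMk
    (Int.measurable_floor.comp ((measurable_E2_apply 1).div_const t))

lemma abs_sub_lt_of_floor_div_eq {a b t : ℝ} (ht : 0 < t) (h : ⌊a / t⌋ = ⌊b / t⌋) :
    |a - b| < t := by
  have := Int.abs_sub_lt_one_of_floor_eq_floor h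
  rwa [← sub_div, abs_div, abs_of_pos ht, div_lt_one ht] at this

lemma floor_div_sub_floor_div_mem {a b t : ℝ} (ht : 0 < t) (h : |a - b| ≤ t) :
    ⌊a / t⌋ - ⌊b / t⌋ ∈ Finset.Icc (-1 : ℤ) 1 := by
  rw [← div_le_one ht, ← abs_of_pos ht, ← abs_div, sub_div, abs_le] at h
  have h1 : ⌊a / t⌋ ≤ ⌊b / t + 1⌋ := Int.floor_le_floor (by linarith)
  have h2 : ⌊b / t⌋ ≤ ⌊a / t + 1⌋ := Int.floor_le_floor (by linarith)
  rw [Int.floor_add_one] at h1 h2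
  rw [Finset.mem_Icc]
  omega

lemma norm_sub_le_of_gridIndex_eq {t : ℝ} (ht : 0 < t) {x y : E2}
    (h : gridIndex t x = gridIndex t y) : ‖x - y‖ ≤ 2 * t := by
  have h0 := abs_sub_lt_of_floor_div_eq ht (congrArg Prod.fst h)
  have h1 := abs_sub_lt_of_floor_div_eq ht (congrArg Prod.snd h)
  have hsq : ‖x - y‖ ^ 2 = (x 0 - y 0) ^ 2 + (x 1 - y 1) ^ 2 := by
    simp [EuclideanSpace.real_norm_sq_eq, Fin.sum_univ_two]
  nlinarith [norm_nonneg (x - y), sq_abs (x 0 - y 0), sq_abs (x 1 - y 1),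
    abs_nonneg (x 0 - y 0), abs_nonneg (x 1 - y 1)]

lemma gridIndex_sub_mem_of_norm_sub_le {t : ℝ} (ht : 0 < t) {x y : E2} (h : ‖x - y‖ ≤ t) :
    gridIndex t x - gridIndex t y ∈ Finset.Icc (-1 : ℤ) 1 ×ˢ Finset.Icc (-1 : ℤ) 1 :=
  Finset.mem_product.2
    ⟨floor_div_sub_floor_div_mem ht ((PiLp.norm_apply_le (x - y) 0).trans h),
      floor_div_sub_floor_div_mem ht ((PiLp.norm_apply_le (x - y) 1).trans h)⟩

lemma tsum_measure_gridCell_sq_le (κ : Measure E2) [SFinite κ] {t : ℝ} (ht : 0 < t) :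
    ∑' k, κ (gridIndex t ⁻¹' {k}) * κ (gridIndex t ⁻¹' {k}) ≤
      (κ.prod κ) (nearDiagonal (2 * t)) := by
  have hcell : ∀ k, MeasurableSet (gridIndex t ⁻¹' {k}) := fun k =>
    measurable_gridIndex t (measurableSet_singleton k)
  have hdisj : Pairwise
      (Function.onFun Disjoint fun k => (gridIndex t ⁻¹' {k}) ×ˢ (gridIndex t ⁻¹' {k})) :=
    fun k l hkl => Disjoint.set_prod_left
      ((disjoint_singleton.2 hkl).preimage (gridIndex t)) _ _
  simp only [← Measure.prod_prod]
  rw [← measure_iUnion hdisj fun k => (hcell k).prod (hcell k)]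
  refine measure_mono (iUnion_subset fun k => ?_)
  rintro ⟨x, y⟩ ⟨hx, hy⟩
  exact norm_sub_le_of_gridIndex_eq ht (hx.trans hy.symm)

lemma ENNReal.mul_le_mul_self_add_mul_self (a b : ℝ≥0∞) : a * b ≤ a * a + b * b := by
  rcases le_total a b with h | h
  · exact (mul_le_mul_left h b).trans le_add_self
  · exact (mul_le_mul_right h a).trans le_self_add

-- Cover `nearDiagonal t` by the products of cells at grid offset `d ∈ {-1, 0, 1}²`,
-- and bound each `μ (cell (k + d)) * ν (cell k)` by AM-GM.
lemma prod_nearDiagonal_le (μ ν : Measure E2) [SFinite μ] [SFinite ν] {t : ℝ} (ht : 0 < t) :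
    (μ.prod ν) (nearDiagonal t) ≤
      9 * ((μ.prod μ) (nearDiagonal (2 * t)) + (ν.prod ν) (nearDiagonal (2 * t))) := by
  set D : Finset (ℤ × ℤ) := Finset.Icc (-1 : ℤ) 1 ×ˢ Finset.Icc (-1 : ℤ) 1
  set cell : ℤ × ℤ → Set E2 := fun k => gridIndex t ⁻¹' {k}
  have hcover : nearDiagonal t ⊆ ⋃ d ∈ D, ⋃ k, cell (k + d) ×ˢ cell k := by
    rintro ⟨x, y⟩ hxy
    simp only [mem_iUnion]
    refine ⟨_, gridIndex_sub_mem_of_norm_sub_le ht hxy, gridIndex t y, ?_, rfl⟩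
    simp [cell]
  have hD : D.card = 9 := by decide
  calc (μ.prod ν) (nearDiagonal t)
      ≤ ∑ d ∈ D, ∑' k, μ (cell (k + d)) * ν (cell k) := by
        refine (measure_mono hcover).trans ((measure_biUnion_finset_le D _).trans
          (Finset.sum_le_sum fun d _ => (measure_iUnion_le _).trans_eq ?_))
        simp only [Measure.prod_prod]
    _ ≤ ∑ d ∈ D, (∑' k, μ (cell (k + d)) * μ (cell (k + d)) + ∑' k, ν (cell k) * ν (cell k)) :=
        Finset.sum_le_sum fun d _ => (ENNReal.tsum_le_tsum fun k =>
          ENNReal.mul_le_mul_self_add_mul_self _ _).trans_eq ENNReal.tsum_add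
    _ = 9 * (∑' k, μ (cell k) * μ (cell k) + ∑' k, ν (cell k) * ν (cell k)) := by
        have hshift : ∀ d, ∑' k, μ (cell (k + d)) * μ (cell (k + d)) =
            ∑' k, μ (cell k) * μ (cell k) := fun d =>
          (Equiv.addRight d).tsum_eq fun k => μ (cell k) * μ (cell k)
        simp only [hshift, Finset.sum_const, hD, nsmul_eq_mul, Nat.cast_ofNat]
    _ ≤ _ := by gcongr <;> exact tsum_measure_gridCell_sq_le _ ht

lemma tsum_ite_natCast_le_eq {M : ℝ} (hM : 0 ≤ M) :
    ∑' n : ℕ, (if (n : ℝ) ≤ M then (1 : ℝ≥0∞) else 0) = ⌊M⌋₊ + 1 := by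
  have hfin : ∀ n ∉ Finset.range (⌊M⌋₊ + 1), (if (n : ℝ) ≤ M then (1 : ℝ≥0∞) else 0) = 0 :=
    fun n hn => if_neg fun h => hn (Finset.mem_range_succ_iff.2 (Nat.le_floor h))
  rw [tsum_eq_sum hfin, Finset.sum_ite_of_true fun n hn =>
    (Nat.le_floor_iff hM).1 (Finset.mem_range_succ_iff.1 hn)]
  simp

lemma ofReal_le_tsum_ite_natCast_le (M : ℝ) :
    ENNReal.ofReal M ≤ ∑' n : ℕ, (if (n : ℝ) ≤ M then (1 : ℝ≥0∞) else 0) := by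
  rcases le_total M 0 with hM | hM
  · simp [ENNReal.ofReal_of_nonpos hM]
  · rw [tsum_ite_natCast_le_eq hM, ← ENNReal.ofReal_natCast, ← ENNReal.ofReal_one,
      ← ENNReal.ofReal_add (by positivity) zero_le_one]
    exact ENNReal.ofReal_le_ofReal (Nat.lt_floor_add_one M).le

lemma tsum_ite_natCast_le_le (M : ℝ) :
    ∑' n : ℕ, (if (n : ℝ) ≤ M then (1 : ℝ≥0∞) else 0) ≤ ENNReal.ofReal (M + 1) := by
  rcases lt_or_ge M 0 with hM | hM
  · simp [fun n : ℕ => (hM.trans_le n.cast_nonneg).not_ge]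
  · rw [tsum_ite_natCast_le_eq hM, ← ENNReal.ofReal_natCast, ← ENNReal.ofReal_one,
      ← ENNReal.ofReal_add (by positivity) zero_le_one]
    exact ENNReal.ofReal_le_ofReal (by linarith [Nat.floor_le hM])

def logEnergy (ρ : Measure (E2 × E2)) : ℝ≥0∞ := ∫⁻ p, ENNReal.ofReal (-log ‖p.1 - p.2‖) ∂ρ

lemma le_mul_exp_neg_natCast_iff {r a : ℝ} (hr : 0 < r) (ha : 0 < a) (n : ℕ) :
    r ≤ a * exp (-n) ↔ (n : ℝ) ≤ log a - log r := by
  rw [← exp_log ha, ← exp_add, ← log_le_iff_le_exp hr, exp_log ha]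
  constructor <;> intro h <;> linarith

lemma tsum_indicator_nearDiagonal_eq {p : E2 × E2} (hp : p.1 ≠ p.2) {a : ℝ} (ha : 0 < a) :
    ∑' n : ℕ, (nearDiagonal (a * exp (-n))).indicator 1 p =
      ∑' n : ℕ, (if (n : ℝ) ≤ log a - log ‖p.1 - p.2‖ then (1 : ℝ≥0∞) else 0) := by
  have hr : 0 < ‖p.1 - p.2‖ := norm_pos_iff.2 (sub_ne_zero.2 hp)
  simp only [indicator_apply, nearDiagonal, mem_ofPred_eq, le_mul_exp_neg_natCast_iff hr ha,
    Pi.one_apply]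

lemma tsum_measure_nearDiagonal_eq_lintegral (ρ : Measure (E2 × E2)) (f : ℕ → ℝ) :
    ∑' n, ρ (nearDiagonal (f n)) = ∫⁻ p, ∑' n, (nearDiagonal (f n)).indicator 1 p ∂ρ := by
  rw [lintegral_tsum fun n => (measurable_one.indicator
    (measurableSet_nearDiagonal _)).aemeasurable]
  exact tsum_congr fun n => (lintegral_indicator_one (measurableSet_nearDiagonal _)).symm

lemma logEnergy_le_tsum (ρ : Measure (E2 × E2)) :
    logEnergy ρ ≤ ∑' n : ℕ, ρ (nearDiagonal (exp (-n))) := by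
  rw [tsum_measure_nearDiagonal_eq_lintegral]
  refine lintegral_mono fun p => ?_
  by_cases hp : p.1 = p.2
  · simp [hp]
  · have h := tsum_indicator_nearDiagonal_eq hp one_pos
    simp only [one_mul, log_one, zero_sub] at h
    exact h ▸ ofReal_le_tsum_ite_natCast_le _

lemma tsum_le_logEnergy (ρ : Measure (E2 × E2)) [IsProbabilityMeasure ρ]
    (hρ : ρ (diagonal E2) = 0) :
    ∑' n : ℕ, ρ (nearDiagonal (2 * exp (-n))) ≤ ENNReal.ofReal (1 + log 2) + logEnergy ρ := by
  rw [tsum_measure_nearDiagonal_eq_lintegral]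
  calc _ ≤ ∫⁻ p, (ENNReal.ofReal (1 + log 2) + ENNReal.ofReal (-log ‖p.1 - p.2‖)) ∂ρ := by
        refine lintegral_mono_ae ?_
        filter_upwards [measure_eq_zero_iff_ae_notMem.1 hρ] with p hp
        rw [tsum_indicator_nearDiagonal_eq hp two_pos]
        refine (tsum_ite_natCast_le_le _).trans
          ((ENNReal.ofReal_le_ofReal ?_).trans ENNReal.ofReal_add_le)
        linarith
    _ = _ := by rw [lintegral_add_left measurable_const, lintegral_const, measure_univ, mul_one,
        logEnergy]

lemma logEnergy_prod_le (μ ν : Measure E2) [IsProbabilityMeasure μ] [IsProbabilityMeasure ν]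
    (hμ : (μ.prod μ) (diagonal E2) = 0) (hν : (ν.prod ν) (diagonal E2) = 0) :
    logEnergy (μ.prod ν) ≤ 9 * (ENNReal.ofReal (1 + log 2) + logEnergy (μ.prod μ)
      + (ENNReal.ofReal (1 + log 2) + logEnergy (ν.prod ν))) :=
  calc logEnergy (μ.prod ν)
      ≤ ∑' n : ℕ, (μ.prod ν) (nearDiagonal (exp (-n))) := logEnergy_le_tsum _
    _ ≤ ∑' n : ℕ, 9 * ((μ.prod μ) (nearDiagonal (2 * exp (-n)))
          + (ν.prod ν) (nearDiagonal (2 * exp (-n)))) :=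
        ENNReal.tsum_le_tsum fun n => prod_nearDiagonal_le μ ν (exp_pos _)
    _ = 9 * (∑' n : ℕ, (μ.prod μ) (nearDiagonal (2 * exp (-n)))
          + ∑' n : ℕ, (ν.prod ν) (nearDiagonal (2 * exp (-n)))) := by
        rw [ENNReal.tsum_mul_left, ENNReal.tsum_add]
    _ ≤ _ := by gcongr <;> exact tsum_le_logEnergy _ ‹_›

lemma logEnergy_le_crossEnergy (μ ν : Measure E2) : logEnergy (μ.prod ν) ≤ crossEnergy μ ν :=
  lintegral_mono ofReal_neg_log_le_energyKernel

lemma crossEnergy_le (μ ν : Measure E2) [IsProbabilityMeasure μ] [IsProbabilityMeasure ν]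
    (h : (μ.prod ν) (diagonal E2) = 0) :
    crossEnergy μ ν ≤ 1 + logEnergy (μ.prod ν) + ∫⁻ x, ENNReal.ofReal (‖x‖ ^ 2) ∂μ
      + ∫⁻ y, ENNReal.ofReal (‖y‖ ^ 2) ∂ν := by
  have hsq : Measurable fun x : E2 => ENNReal.ofReal (‖x‖ ^ 2) := by fun_prop
  rw [← lintegral_comp_fst_prod μ ν hsq, ← lintegral_comp_snd_prod μ ν hsq, logEnergy,
    crossEnergy, lintegral_congr_ae (energyKernel_ae_eq_ofReal h)]
  calc _ ≤ ∫⁻ p, (1 + ENNReal.ofReal (-log ‖p.1 - p.2‖) + ENNReal.ofReal (‖p.1‖ ^ 2)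
          + ENNReal.ofReal (‖p.2‖ ^ 2)) ∂(μ.prod ν) := by
        refine lintegral_mono fun p => ?_
        rw [← ENNReal.ofReal_one]
        refine (ENNReal.ofReal_le_ofReal ?_).trans (ENNReal.ofReal_add_le.trans
          (add_le_add_left (ENNReal.ofReal_add_le.trans
            (add_le_add_left ENNReal.ofReal_add_le _)) _))
        nlinarith [energyDensity_le p, sq_nonneg ‖p.1‖, sq_nonneg ‖p.2‖]
    _ = _ := by
        rw [lintegral_add_right _ (by fun_prop), lintegral_add_right _ (by fun_prop),
          lintegral_add_left measurable_const, lintegral_const, measure_univ, mul_one]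

lemma crossEnergy_ne_top {μ ν : Measure E2} [IsProbabilityMeasure μ] [IsProbabilityMeasure ν]
    (hμ : crossEnergy μ μ ≠ ∞) (hν : crossEnergy ν ν ≠ ∞) : crossEnergy μ ν ≠ ∞ := by
  have hμd := prod_diagonal_eq_zero_of_crossEnergy_ne_top hμ
  have hνd := prod_diagonal_eq_zero_of_crossEnergy_ne_top hν
  have := nullSingletonClass_of_prod_diagonal_eq_zero hνd
  have hμlog := ne_top_of_le_ne_top hμ (logEnergy_le_crossEnergy μ μ)
  have hνlog := ne_top_of_le_ne_top hν (logEnergy_le_crossEnergy ν ν)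
  have hlog := ne_top_of_le_ne_top (by finiteness) (logEnergy_prod_le μ ν hμd hνd)
  have hμsq := lintegral_sq_norm_ne_top hμ
  have hνsq := lintegral_sq_norm_ne_top hν
  exact ne_top_of_le_ne_top (by finiteness) (crossEnergy_le μ ν (prod_diagonal_eq_zero μ ν))

lemma lintegral_prod_smul_add_smul {α : Type*} [MeasurableSpace α] (f : α × α → ℝ≥0∞)
    (μ ν : Measure α) [SFinite μ] [SFinite ν] (s r : NNReal) :
    ∫⁻ p, f p ∂((s • μ + r • ν).prod (s • μ + r • ν)) =
      s * s * ∫⁻ p, f p ∂(μ.prod μ) + s * r * ∫⁻ p, f p ∂(μ.prod ν)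
        + (r * s * ∫⁻ p, f p ∂(ν.prod μ) + r * r * ∫⁻ p, f p ∂(ν.prod ν)) := by
  simp only [Measure.add_prod, Measure.prod_add, Measure.prod_smul_left, Measure.prod_smul_right,
    lintegral_add_measure, lintegral_smul_measure, ENNReal.smul_def, smul_eq_mul]
  ring

lemma le_of_forall_le_quadratic {A B C : ℝ}
    (h : ∀ t : unitInterval, A ≤ (1 - t) ^ 2 * A + 2 * t * (1 - t) * B + t ^ 2 * C) :
    A ≤ B := by
  by_contra! hBA
  have hden : 0 < A - B + |A - 2 * B + C| := by positivity
  -- `t |A - 2B + C| ≤ A - B`, so the `t²` term cannot undo the decrease `2t(B - A)`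
  set t := (A - B) / (A - B + |A - 2 * B + C|)
  have ht0 : 0 < t := div_pos (by linarith) hden
  have ht1 : t ≤ 1 := (div_le_one hden).2 (by linarith [abs_nonneg (A - 2 * B + C)])
  have hteq : t * (A - B + |A - 2 * B + C|) = A - B := div_mul_cancel₀ _ hden.ne'
  nlinarith [h ⟨t, ht0.le, ht1⟩, mul_le_mul_of_nonneg_left (le_abs_self (A - 2 * B + C))
    (mul_nonneg ht0.le ht0.le), mul_pos ht0 (sub_pos.2 hBA), mul_pos ht0 ht0]

lemma crossEnergy_self_le_crossEnergy {μ ν : Measure E2} [IsProbabilityMeasure μ]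
    [IsProbabilityMeasure ν]
    (hmin : ∀ ν' : Measure E2, IsProbabilityMeasure ν' → Ienergy μ ≤ Ienergy ν')
    (hμ : crossEnergy μ μ ≠ ∞) (hν : crossEnergy ν ν ≠ ∞) (hμν : crossEnergy μ ν ≠ ∞) :
    crossEnergy μ μ ≤ crossEnergy μ ν := by
  rw [← ENNReal.toReal_le_toReal hμ hμν]
  refine le_of_forall_le_quadratic (C := (crossEnergy ν ν).toReal) fun t => ?_
  set s := unitInterval.toNNReal (unitInterval.symm t)
  set r := unitInterval.toNNReal t
  have hmix : crossEnergy μ μ ≤ r * r * crossEnergy ν ν + r * s * crossEnergy ν μ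
      + (s * r * crossEnergy μ ν + s * s * crossEnergy μ μ) :=
    (hmin _ inferInstance).trans_eq (lintegral_prod_smul_add_smul energyKernel ν μ _ _)
  rw [crossEnergy_comm ν μ] at hmix
  have := ENNReal.toReal_mono (by finiteness) hmix
  simp (disch := finiteness) only [ENNReal.toReal_add, ENNReal.toReal_mul, ENNReal.coe_toReal,
    s, r, unitInterval.coe_toNNReal, unitInterval.coe_symm_eq] at this
  linarith

lemma integrable_sq_norm_of_crossEnergy_ne_top {μ : Measure E2} [IsProbabilityMeasure μ]
    (hμ : crossEnergy μ μ ≠ ∞) : Integrable (fun x : E2 => ‖x‖ ^ 2) μ :=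
  ⟨by fun_prop, (hasFiniteIntegral_iff_ofReal (ae_of_all _ fun _ => sq_nonneg _)).2
    (lt_top_iff_ne_top.2 (lintegral_sq_norm_ne_top hμ))⟩

lemma energyDensity_ae_nonneg {κ μ : Measure E2} (hd : (κ.prod μ) (diagonal E2) = 0) :
    0 ≤ᵐ[κ.prod μ] energyDensity := by
  filter_upwards [measure_eq_zero_iff_ae_notMem.1 hd] with p hp
  exact energyDensity_nonneg hp

lemma integrable_energyDensity {κ μ : Measure E2} (hd : (κ.prod μ) (diagonal E2) = 0)
    (h : crossEnergy κ μ ≠ ∞) : Integrable energyDensity (κ.prod μ) := by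
  refine ⟨measurable_energyDensity.aestronglyMeasurable, ?_⟩
  rw [hasFiniteIntegral_iff_ofReal (energyDensity_ae_nonneg hd),
    ← lintegral_congr_ae (energyKernel_ae_eq_ofReal hd)]
  exact lt_top_iff_ne_top.2 h

lemma integral_energyDensity {κ μ : Measure E2} (hd : (κ.prod μ) (diagonal E2) = 0) :
    ∫ p, energyDensity p ∂(κ.prod μ) = (crossEnergy κ μ).toReal := by
  rw [integral_eq_lintegral_of_nonneg_ae (energyDensity_ae_nonneg hd)
      measurable_energyDensity.aestronglyMeasurable, crossEnergy,
    lintegral_congr_ae (energyKernel_ae_eq_ofReal hd)]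

lemma integral_energyDensity_right {μ : Measure E2} [IsProbabilityMeasure μ] {x : E2}
    (hx : Integrable (fun y => energyDensity (x, y)) μ)
    (hsq : Integrable (fun y : E2 => ‖y‖ ^ 2) μ) :
    ∫ y, energyDensity (x, y) ∂μ = Vconv μ x + ‖x‖ ^ 2 / 2 + (∫ y, ‖y‖ ^ 2 ∂μ) / 2 := by
  have hq : Integrable (fun y : E2 => (‖x‖ ^ 2 + ‖y‖ ^ 2) / 2) μ :=
    ((integrable_const _).add hsq).div_const 2
  have hV : Integrable (fun y => V (x - y)) μ := by
    refine (hx.sub hq).congr (ae_of_all _ fun y => ?_)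
    simp [energyDensity]
  simp only [energyDensity]
  rw [integral_add hV hq, integral_div, integral_add (integrable_const _) hsq, integral_const,
    probReal_univ, one_smul, Vconv]
  ring

lemma integral_Vconv_add_sq_norm_div_two {κ μ : Measure E2} [IsProbabilityMeasure κ]
    [IsProbabilityMeasure μ] (hd : (κ.prod μ) (diagonal E2) = 0) (h : crossEnergy κ μ ≠ ∞)
    (hsq : Integrable (fun y : E2 => ‖y‖ ^ 2) μ) :
    ∫ x, (Vconv μ x + ‖x‖ ^ 2 / 2) ∂κ = (crossEnergy κ μ).toReal - (∫ y, ‖y‖ ^ 2 ∂μ) / 2 := by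
  have hI := integrable_energyDensity hd h
  calc ∫ x, (Vconv μ x + ‖x‖ ^ 2 / 2) ∂κ
      = ∫ x, (∫ y, energyDensity (x, y) ∂μ - (∫ y, ‖y‖ ^ 2 ∂μ) / 2) ∂κ :=
        integral_congr_ae (hI.prod_right_ae.mono fun x hx => by
          simp only [integral_energyDensity_right hx hsq]
          ring)
    _ = _ := by
        rw [integral_sub hI.integral_prod_left (integrable_const _), integral_const,
          ← integral_prod _ hI, integral_energyDensity hd, probReal_univ, one_smul]

theorem first_variation_inequality_general (μ : Measure E2)
    (hμ : IsProbabilityMeasure μ)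
    (hmin : ∀ ν' : Measure E2, IsProbabilityMeasure ν' → Ienergy μ ≤ Ienergy ν')
    (ν : Measure E2) (hν : IsProbabilityMeasure ν)
    (hνe : Ienergy ν < ⊤) :
    ∫ x, (Vconv μ x + ‖x‖ ^ 2 / 2) ∂μ ≤ ∫ x, (Vconv μ x + ‖x‖ ^ 2 / 2) ∂ν := by
  have hμμ : crossEnergy μ μ ≠ ∞ := by
    rw [← Ienergy_eq_crossEnergy]
    exact ((hmin ν hν).trans_lt hνe).ne
  have hνν : crossEnergy ν ν ≠ ∞ := by
    rw [← Ienergy_eq_crossEnergy]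
    exact hνe.ne
  have hμν : crossEnergy μ ν ≠ ∞ := crossEnergy_ne_top hμμ hνν
  have hνμ : crossEnergy ν μ ≠ ∞ := crossEnergy_comm μ ν ▸ hμν
  have := nullSingletonClass_of_prod_diagonal_eq_zero
    (prod_diagonal_eq_zero_of_crossEnergy_ne_top hμμ)
  have hsq := integrable_sq_norm_of_crossEnergy_ne_top hμμ
  rw [integral_Vconv_add_sq_norm_div_two (prod_diagonal_eq_zero μ μ) hμμ hsq,
    integral_Vconv_add_sq_norm_div_two (prod_diagonal_eq_zero ν μ) hνμ hsq,
    sub_le_sub_iff_right, ENNReal.toReal_le_toReal hμμ hνμ, ← crossEnergy_comm μ ν]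
  exact crossEnergy_self_le_crossEnergy hmin hμμ hνν hμν

/-- First-variation inequality at a minimiser `μ` of `I`: for every compactly
supported probability measure `ν` with `I(ν) < ∞`,
`∫ ((V ∗ μ) + |x|²/2) dν ≥ ∫ ((V ∗ μ) + |x|²/2) dμ`. -/
theorem first_variation_inequality (μ : Measure E2)
    (hμ : IsProbabilityMeasure μ)
    (hmin : ∀ ν' : Measure E2, IsProbabilityMeasure ν' → Ienergy μ ≤ Ienergy ν')
    (ν : Measure E2) (hν : IsProbabilityMeasure ν)
    (hνc : HasCompactMeasureSupport ν) (hνe : Ienergy ν < ⊤) :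
    ∫ x, (Vconv μ x + ‖x‖ ^ 2 / 2) ∂μ ≤ ∫ x, (Vconv μ x + ‖x‖ ^ 2 / 2) ∂ν :=
  first_variation_inequality_general μ hμ hmin ν hν hνe

end
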